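/- arXiv:2202.11218 — 6 statements merged into one kernel-verified Lean document; each statement's English description precedes it below -/
import Mathlib

section
/- Let I₀ ∈ ℝ and let z : (I₀, ∞) → ℝ be continuously differentiable. Suppose z satisfies the near-perfect homeostasis condition on (I₀, ∞): there exist I_sp ∈ (I₀, ∞) and δ > 0 such that |z(I) − z(I_sp)| ≤ δ for all I ∈ (I₀, ∞). Then at least one of the following holds: (i) there exists I_c ∈ (I₀, ∞) with z′(I_c) = 0; or (ii) there exists a strictly increasing sequence (I_n)_{n≥1} in (I₀, ∞) with I_n → +∞ and z′(I_n) → 0 as n → ∞. -/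
/-!
If `z'` never vanishes, Darboux's theorem forces it to have constant sign, so `z` is monotone;
being bounded, it converges along `Isp + n`. The mean value theorem on `[Isp + n, Isp + n + 1]`
gives points `c n` with `z' (c n) = z (Isp + n + 1) - z (Isp + n)`, and these differences tend to `0`.
-/

open Filter Set Topology

lemma monotoneOn_or_antitoneOn_of_hasDerivAt_ne_zero {f f' : ℝ → ℝ} {s : Set ℝ}
    (hs : Convex ℝ s) (hf : ∀ x ∈ s, HasDerivAt f (f' x) x)
    (hf' : ∀ x ∈ s, f' x ≠ 0) : MonotoneOn f s ∨ AntitoneOn f s := by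
  have hcont : ContinuousOn f s := fun x hx => (hf x hx).continuousAt.continuousWithinAt
  have hf_within : ∀ x ∈ interior s, HasDerivWithinAt f (f' x) (interior s) x := fun x hx =>
    (hf x (interior_subset hx)).hasDerivWithinAt
  rcases hasDerivWithinAt_forall_lt_or_forall_gt_of_forall_ne hs
    (fun x hx => (hf x hx).hasDerivWithinAt) hf' with hneg | hpos
  · exact .inr <| antitoneOn_of_hasDerivWithinAt_nonpos hs hcont hf_within
      fun x hx => (hneg x (interior_subset hx)).le
  · exact .inl <| monotoneOn_of_hasDerivWithinAt_nonneg hs hcont hf_within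
      fun x hx => (hpos x (interior_subset hx)).le

lemma exists_tendsto_apply_add_natCast {f : ℝ → ℝ} {s : Set ℝ} {a : ℝ} (ha : Ici a ⊆ s)
    (hmono : MonotoneOn f s ∨ AntitoneOn f s) (hbdd : Bornology.IsBounded (f '' s)) :
    ∃ L, Tendsto (fun n : ℕ => f (a + n)) atTop (𝓝 L) := by
  have hmem : ∀ n : ℕ, a + n ∈ s := fun n => ha (by simp)
  have hrange : range (fun n : ℕ => f (a + n)) ⊆ f '' s := range_subset_iff.2 fun n =>
    mem_image_of_mem f (hmem n)
  have hshift : Monotone (fun n : ℕ => a + (n : ℝ)) := fun _ _ h => by simpa using h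
  rcases hmono with hmono | hanti
  · exact ⟨_, tendsto_atTop_ciSup (fun m n h => hmono (hmem m) (hmem n) (hshift h))
      (hbdd.bddAbove.mono hrange)⟩
  · exact ⟨_, tendsto_atTop_ciInf (fun m n h => hanti (hmem m) (hmem n) (hshift h))
      (hbdd.bddBelow.mono hrange)⟩

lemma exists_mem_Ioo_hasDerivAt_eq_sub {f f' : ℝ → ℝ} {x : ℝ}
    (hf : ∀ y ∈ Icc x (x + 1), HasDerivAt f (f' y) y) :
    ∃ c ∈ Ioo x (x + 1), f' c = f (x + 1) - f x := by
  obtain ⟨c, hc, hc_eq⟩ := exists_hasDerivAt_eq_slope f f' (lt_add_one x)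
    (fun y hy => (hf y hy).continuousAt.continuousWithinAt)
    (fun y hy => hf y (Ioo_subset_Icc_self hy))
  exact ⟨c, hc, by rw [hc_eq, add_sub_cancel_left, div_one]⟩

theorem exists_strictMono_tendsto_deriv_zero_of_tendsto {f f' : ℝ → ℝ} {a L : ℝ}
    (hf : ∀ x ∈ Ici a, HasDerivAt f (f' x) x)
    (hL : Tendsto (fun n : ℕ => f (a + n)) atTop (𝓝 L)) :
    ∃ c : ℕ → ℝ, StrictMono c ∧ (∀ n, a < c n) ∧ Tendsto c atTop atTop ∧
      Tendsto (fun n => f' (c n)) atTop (𝓝 0) := by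
  have hmvt (n : ℕ) : ∃ c ∈ Ioo (a + n) (a + n + 1), f' c = f (a + n + 1) - f (a + n) :=
    exists_mem_Ioo_hasDerivAt_eq_sub fun y hy => hf y <|
      (le_add_of_nonneg_right n.cast_nonneg).trans hy.1
  choose c hc hc_eq using hmvt
  have hL_succ : Tendsto (fun n : ℕ => f (a + n + 1)) atTop (𝓝 L) := by
    simpa [add_assoc] using (tendsto_add_atTop_iff_nat 1).2 hL
  refine ⟨c, strictMono_nat_of_lt_succ fun n => ?_, fun n => ?_, ?_, ?_⟩
  · have := (hc (n + 1)).1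
    push_cast at this
    linarith [(hc n).2]
  · exact (le_add_of_nonneg_right n.cast_nonneg).trans_lt (hc n).1
  · exact tendsto_atTop_mono (fun n => (hc n).1.le)
      (tendsto_atTop_add_const_left atTop a tendsto_natCast_atTop_atTop)
  · simpa [hc_eq] using hL_succ.sub hL

theorem near_perfect_homeostasis_dichotomy_general
    (I₀ : ℝ) (z z' : ℝ → ℝ)
    (hderiv : ∀ x ∈ Set.Ioi I₀, HasDerivAt z (z' x) x)
    (Isp : ℝ) (hIsp : Isp ∈ Set.Ioi I₀) (δ : ℝ)
    (hnp : ∀ I ∈ Set.Ioi I₀, |z I - z Isp| ≤ δ) :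
    (∃ Ic ∈ Set.Ioi I₀, z' Ic = 0) ∨
    (∃ Iseq : ℕ → ℝ, StrictMono Iseq ∧ (∀ n, Iseq n ∈ Set.Ioi I₀) ∧
      Tendsto Iseq atTop atTop ∧
      Tendsto (fun n => z' (Iseq n)) atTop (nhds 0)) := by
  refine or_iff_not_imp_left.2 fun hzero => ?_
  have hne : ∀ x ∈ Ioi I₀, z' x ≠ 0 := fun x hx h => hzero ⟨x, hx, h⟩
  have hIci : Ici Isp ⊆ Ioi I₀ := Ici_subset_Ioi.2 hIsp
  have hbdd : Bornology.IsBounded (z '' Ioi I₀) :=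
    Metric.isBounded_closedBall.subset <| image_subset_iff.2 fun I hI => by
      simpa [Real.dist_eq] using hnp I hI
  obtain ⟨L, hL⟩ := exists_tendsto_apply_add_natCast hIci
    (monotoneOn_or_antitoneOn_of_hasDerivAt_ne_zero (convex_Ioi I₀) hderiv hne) hbdd
  obtain ⟨c, hc_mono, hc_gt, hc_top, hc_lim⟩ :=
    exists_strictMono_tendsto_deriv_zero_of_tendsto (fun x hx => hderiv x (hIci hx)) hL
  exact ⟨c, hc_mono, fun n => hIsp.trans (hc_gt n), hc_top, hc_lim⟩

/-- Near-perfect homeostasis on a semi-infinite interval implies either an interior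
point of infinitesimal homeostasis, or a strictly increasing sequence going to `+∞`
along which the derivative tends to `0`. -/
theorem near_perfect_homeostasis_dichotomy
    (I₀ : ℝ) (z z' : ℝ → ℝ)
    (hderiv : ∀ x ∈ Set.Ioi I₀, HasDerivAt z (z' x) x)
    (hcont : ContinuousOn z' (Set.Ioi I₀))
    (Isp : ℝ) (hIsp : Isp ∈ Set.Ioi I₀) (δ : ℝ) (hδ : 0 < δ)
    (hnp : ∀ I ∈ Set.Ioi I₀, |z I - z Isp| ≤ δ) :
    (∃ Ic ∈ Set.Ioi I₀, z' Ic = 0) ∨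
    (∃ Iseq : ℕ → ℝ, StrictMono Iseq ∧ (∀ n, Iseq n ∈ Set.Ioi I₀) ∧
      Tendsto Iseq atTop atTop ∧
      Tendsto (fun n => z' (Iseq n)) atTop (nhds 0)) :=
  near_perfect_homeostasis_dichotomy_general I₀ z z' hderiv Isp hIsp δ hnp
end

section
/- Let s, d, u ∈ ℕ and consider a real square matrix J of size (1 + s + d + u + 1), written in block form with rows and columns indexed by blocks (ι, σ, d, u, o) of sizes (1, s, d, u, 1): J = [[A_{ιι}, A_{ισ}, A_{ιd}, 0, A_{ιo}], [A_{σι}, A_{σσ}, A_{σd}, 0, A_{σo}], [0, 0, A_{dd}, 0, 0], [A_{uι}, A_{uσ}, A_{ud}, A_{uu}, A_{uo}], [A_{oι}, A_{oσ}, A_{od}, 0, A_{oo}]]. Let J^c be the (1 + s + 1) × (1 + s + 1) matrix [[A_{ιι}, A_{ισ}, A_{ιo}], [A_{σι}, A_{σσ}, A_{σo}], [A_{oι}, A_{oσ}, A_{oo}]]. Then det(J) = det(A_{dd}) · det(A_{uu}) · det(J^c). -/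
open Matrix

/-- Index type for the full network: blocks (ι, σ, d, u, o) of sizes (1, s, d, u, 1). -/
abbrev FullIdx (s d u : ℕ) := Fin 1 ⊕ Fin s ⊕ Fin d ⊕ Fin u ⊕ Fin 1

/-- Index type for the core network: blocks (ι, σ, o) of sizes (1, s, 1). -/
abbrev CoreIdx (s : ℕ) := Fin 1 ⊕ Fin s ⊕ Fin 1

/-- The Jacobian of the full network, in block form with rows and columns indexed by
blocks (ι, σ, d, u, o); the d-rows vanish off the d-block and the u-column entries
vanish off the u-rows. -/
def fullJacobian {s d u : ℕ}
    (Aii : Matrix (Fin 1) (Fin 1) ℝ) (Ais : Matrix (Fin 1) (Fin s) ℝ)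
    (Aid : Matrix (Fin 1) (Fin d) ℝ) (Aio : Matrix (Fin 1) (Fin 1) ℝ)
    (Asi : Matrix (Fin s) (Fin 1) ℝ) (Ass : Matrix (Fin s) (Fin s) ℝ)
    (Asd : Matrix (Fin s) (Fin d) ℝ) (Aso : Matrix (Fin s) (Fin 1) ℝ)
    (Add : Matrix (Fin d) (Fin d) ℝ)
    (Aui : Matrix (Fin u) (Fin 1) ℝ) (Aus : Matrix (Fin u) (Fin s) ℝ)
    (Aud : Matrix (Fin u) (Fin d) ℝ) (Auu : Matrix (Fin u) (Fin u) ℝ)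
    (Auo : Matrix (Fin u) (Fin 1) ℝ)
    (Aoi : Matrix (Fin 1) (Fin 1) ℝ) (Aos : Matrix (Fin 1) (Fin s) ℝ)
    (Aod : Matrix (Fin 1) (Fin d) ℝ) (Aoo : Matrix (Fin 1) (Fin 1) ℝ) :
    Matrix (FullIdx s d u) (FullIdx s d u) ℝ :=
  Matrix.of fun i j =>
    match i, j with
    | .inl i, .inl j => Aii i j
    | .inl i, .inr (.inl j) => Ais i j
    | .inl i, .inr (.inr (.inl j)) => Aid i j
    | .inl _, .inr (.inr (.inr (.inl _))) => 0
    | .inl i, .inr (.inr (.inr (.inr j))) => Aio i j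
    | .inr (.inl i), .inl j => Asi i j
    | .inr (.inl i), .inr (.inl j) => Ass i j
    | .inr (.inl i), .inr (.inr (.inl j)) => Asd i j
    | .inr (.inl _), .inr (.inr (.inr (.inl _))) => 0
    | .inr (.inl i), .inr (.inr (.inr (.inr j))) => Aso i j
    | .inr (.inr (.inl _)), .inl _ => 0
    | .inr (.inr (.inl _)), .inr (.inl _) => 0
    | .inr (.inr (.inl i)), .inr (.inr (.inl j)) => Add i j
    | .inr (.inr (.inl _)), .inr (.inr (.inr (.inl _))) => 0
    | .inr (.inr (.inl _)), .inr (.inr (.inr (.inr _))) => 0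
    | .inr (.inr (.inr (.inl i))), .inl j => Aui i j
    | .inr (.inr (.inr (.inl i))), .inr (.inl j) => Aus i j
    | .inr (.inr (.inr (.inl i))), .inr (.inr (.inl j)) => Aud i j
    | .inr (.inr (.inr (.inl i))), .inr (.inr (.inr (.inl j))) => Auu i j
    | .inr (.inr (.inr (.inl i))), .inr (.inr (.inr (.inr j))) => Auo i j
    | .inr (.inr (.inr (.inr i))), .inl j => Aoi i j
    | .inr (.inr (.inr (.inr i))), .inr (.inl j) => Aos i j
    | .inr (.inr (.inr (.inr i))), .inr (.inr (.inl j)) => Aod i j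
    | .inr (.inr (.inr (.inr _))), .inr (.inr (.inr (.inl _))) => 0
    | .inr (.inr (.inr (.inr i))), .inr (.inr (.inr (.inr j))) => Aoo i j

/-- The Jacobian of the core network: blocks (ι, σ, o). -/
def coreJacobian {s : ℕ}
    (Aii : Matrix (Fin 1) (Fin 1) ℝ) (Ais : Matrix (Fin 1) (Fin s) ℝ)
    (Aio : Matrix (Fin 1) (Fin 1) ℝ)
    (Asi : Matrix (Fin s) (Fin 1) ℝ) (Ass : Matrix (Fin s) (Fin s) ℝ)
    (Aso : Matrix (Fin s) (Fin 1) ℝ)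
    (Aoi : Matrix (Fin 1) (Fin 1) ℝ) (Aos : Matrix (Fin 1) (Fin s) ℝ)
    (Aoo : Matrix (Fin 1) (Fin 1) ℝ) :
    Matrix (CoreIdx s) (CoreIdx s) ℝ :=
  Matrix.of fun i j =>
    match i, j with
    | .inl i, .inl j => Aii i j
    | .inl i, .inr (.inl j) => Ais i j
    | .inl i, .inr (.inr j) => Aio i j
    | .inr (.inl i), .inl j => Asi i j
    | .inr (.inl i), .inr (.inl j) => Ass i j
    | .inr (.inl i), .inr (.inr j) => Aso i j
    | .inr (.inr i), .inl j => Aoi i j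
    | .inr (.inr i), .inr (.inl j) => Aos i j
    | .inr (.inr i), .inr (.inr j) => Aoo i j

/-- Reordering the blocks (ι, σ, d, u, o) as (((ι, σ, o), d), u) makes `fullJacobian` block lower
triangular with diagonal blocks `J^c`, `A_dd`, `A_uu`: the d-rows vanish off the d-block and the
u-columns vanish off the u-rows. -/
def fullIdxEquiv (s d u : ℕ) : (CoreIdx s ⊕ Fin d) ⊕ Fin u ≃ FullIdx s d u where
  toFun
    | .inl (.inl (.inl i)) => .inl i
    | .inl (.inl (.inr (.inl i))) => .inr (.inl i)
    | .inl (.inl (.inr (.inr i))) => .inr (.inr (.inr (.inr i)))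
    | .inl (.inr i) => .inr (.inr (.inl i))
    | .inr i => .inr (.inr (.inr (.inl i)))
  invFun
    | .inl i => .inl (.inl (.inl i))
    | .inr (.inl i) => .inl (.inl (.inr (.inl i)))
    | .inr (.inr (.inl i)) => .inl (.inr i)
    | .inr (.inr (.inr (.inl i))) => .inr i
    | .inr (.inr (.inr (.inr i))) => .inl (.inl (.inr (.inr i)))
  left_inv := by rintro (((i | i | i) | i) | i) <;> rfl
  right_inv := by rintro (i | i | i | i | i) <;> rfl

theorem det_fromBlocks_fromBlocks_zero {R l m n : Type*} [CommRing R]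
    [Fintype l] [DecidableEq l] [Fintype m] [DecidableEq m] [Fintype n] [DecidableEq n]
    (A : Matrix l l R) (B : Matrix l m R) (D : Matrix m m R) (C : Matrix n (l ⊕ m) R)
    (E : Matrix n n R) :
    (fromBlocks (fromBlocks A B 0 D) 0 C E).det = A.det * D.det * E.det := by
  rw [det_fromBlocks_zero₁₂, det_fromBlocks_zero₂₁]

def coreRowsDCols {s d : ℕ} (Aid : Matrix (Fin 1) (Fin d) ℝ) (Asd : Matrix (Fin s) (Fin d) ℝ)
    (Aod : Matrix (Fin 1) (Fin d) ℝ) : Matrix (CoreIdx s) (Fin d) ℝ :=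
  of fun i j =>
    match i with
    | .inl i => Aid i j
    | .inr (.inl i) => Asd i j
    | .inr (.inr i) => Aod i j

def uRowsCoreDCols {s d u : ℕ} (Aui : Matrix (Fin u) (Fin 1) ℝ) (Aus : Matrix (Fin u) (Fin s) ℝ)
    (Auo : Matrix (Fin u) (Fin 1) ℝ) (Aud : Matrix (Fin u) (Fin d) ℝ) :
    Matrix (Fin u) (CoreIdx s ⊕ Fin d) ℝ :=
  of fun i j =>
    match j with
    | .inl (.inl j) => Aui i j
    | .inl (.inr (.inl j)) => Aus i j
    | .inl (.inr (.inr j)) => Auo i j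
    | .inr j => Aud i j

theorem fullJacobian_eq_reindex_fromBlocks {s d u : ℕ}
    (Aii : Matrix (Fin 1) (Fin 1) ℝ) (Ais : Matrix (Fin 1) (Fin s) ℝ)
    (Aid : Matrix (Fin 1) (Fin d) ℝ) (Aio : Matrix (Fin 1) (Fin 1) ℝ)
    (Asi : Matrix (Fin s) (Fin 1) ℝ) (Ass : Matrix (Fin s) (Fin s) ℝ)
    (Asd : Matrix (Fin s) (Fin d) ℝ) (Aso : Matrix (Fin s) (Fin 1) ℝ)
    (Add : Matrix (Fin d) (Fin d) ℝ)
    (Aui : Matrix (Fin u) (Fin 1) ℝ) (Aus : Matrix (Fin u) (Fin s) ℝ)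
    (Aud : Matrix (Fin u) (Fin d) ℝ) (Auu : Matrix (Fin u) (Fin u) ℝ)
    (Auo : Matrix (Fin u) (Fin 1) ℝ)
    (Aoi : Matrix (Fin 1) (Fin 1) ℝ) (Aos : Matrix (Fin 1) (Fin s) ℝ)
    (Aod : Matrix (Fin 1) (Fin d) ℝ) (Aoo : Matrix (Fin 1) (Fin 1) ℝ) :
    fullJacobian Aii Ais Aid Aio Asi Ass Asd Aso Add Aui Aus Aud Auu Auo Aoi Aos Aod Aoo =
      reindex (fullIdxEquiv s d u) (fullIdxEquiv s d u)
        (fromBlocks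
          (fromBlocks (coreJacobian Aii Ais Aio Asi Ass Aso Aoi Aos Aoo)
            (coreRowsDCols Aid Asd Aod) 0 Add)
          0 (uRowsCoreDCols Aui Aus Auo Aud) Auu) := by
  ext (i | i | i | i | i) (j | j | j | j | j) <;> rfl

/-- The determinant of the full Jacobian factors as
`det J = det A_dd · det A_uu · det J^c`. -/
theorem det_fullJacobian_eq {s d u : ℕ}
    (Aii : Matrix (Fin 1) (Fin 1) ℝ) (Ais : Matrix (Fin 1) (Fin s) ℝ)
    (Aid : Matrix (Fin 1) (Fin d) ℝ) (Aio : Matrix (Fin 1) (Fin 1) ℝ)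
    (Asi : Matrix (Fin s) (Fin 1) ℝ) (Ass : Matrix (Fin s) (Fin s) ℝ)
    (Asd : Matrix (Fin s) (Fin d) ℝ) (Aso : Matrix (Fin s) (Fin 1) ℝ)
    (Add : Matrix (Fin d) (Fin d) ℝ)
    (Aui : Matrix (Fin u) (Fin 1) ℝ) (Aus : Matrix (Fin u) (Fin s) ℝ)
    (Aud : Matrix (Fin u) (Fin d) ℝ) (Auu : Matrix (Fin u) (Fin u) ℝ)
    (Auo : Matrix (Fin u) (Fin 1) ℝ)
    (Aoi : Matrix (Fin 1) (Fin 1) ℝ) (Aos : Matrix (Fin 1) (Fin s) ℝ)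
    (Aod : Matrix (Fin 1) (Fin d) ℝ) (Aoo : Matrix (Fin 1) (Fin 1) ℝ) :
    (fullJacobian Aii Ais Aid Aio Asi Ass Asd Aso Add Aui Aus Aud Auu Auo
        Aoi Aos Aod Aoo).det =
      Add.det * Auu.det *
        (coreJacobian Aii Ais Aio Asi Ass Aso Aoi Aos Aoo).det := by
  rw [fullJacobian_eq_reindex_fromBlocks, det_reindex_self, det_fromBlocks_fromBlocks_zero]
  ring
end

section
/- Let s, d, u ∈ ℕ and consider a real square matrix H of size (s + d + u + 1), written in block form with rows indexed by blocks (σ, d, u, o) of sizes (s, d, u, 1) and columns indexed by blocks (ι, σ, d, u) of sizes (1, s, d, u): H = [[A_{σι}, A_{σσ}, A_{σd}, 0], [0, 0, A_{dd}, 0], [A_{uι}, A_{uσ}, A_{ud}, A_{uu}], [A_{oι}, A_{oσ}, A_{od}, 0]]. Let H^c be the (s + 1) × (s + 1) matrix [[A_{σι}, A_{σσ}], [A_{oι}, A_{oσ}]]. Then there exists ε ∈ {1, −1}, depending only on the block dimensions s, d, u, such that det(H) = ε · det(A_{dd}) · det(A_{uu}) · det(H^c). -/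
open Matrix

/-- Row index of the homeostasis matrix: blocks (σ, d, u, o) of sizes (s, d, u, 1). -/
abbrev HRowIdx (s d u : ℕ) := Fin s ⊕ Fin d ⊕ Fin u ⊕ Fin 1

/-- Column index of the homeostasis matrix: blocks (ι, σ, d, u) of sizes (1, s, d, u). -/
abbrev HColIdx (s d u : ℕ) := Fin 1 ⊕ Fin s ⊕ Fin d ⊕ Fin u

/-- The homeostasis matrix of the full network, with rows indexed by the blocks
(σ, d, u, o) and columns indexed by the blocks (ι, σ, d, u). -/
def fullHomeostasisMatrix {s d u : ℕ}
    (Asi : Matrix (Fin s) (Fin 1) ℝ) (Ass : Matrix (Fin s) (Fin s) ℝ)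
    (Asd : Matrix (Fin s) (Fin d) ℝ)
    (Add : Matrix (Fin d) (Fin d) ℝ)
    (Aui : Matrix (Fin u) (Fin 1) ℝ) (Aus : Matrix (Fin u) (Fin s) ℝ)
    (Aud : Matrix (Fin u) (Fin d) ℝ) (Auu : Matrix (Fin u) (Fin u) ℝ)
    (Aoi : Matrix (Fin 1) (Fin 1) ℝ) (Aos : Matrix (Fin 1) (Fin s) ℝ)
    (Aod : Matrix (Fin 1) (Fin d) ℝ) :
    Matrix (HRowIdx s d u) (HColIdx s d u) ℝ :=
  Matrix.of fun i j =>
    match i, j with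
    | .inl i, .inl j => Asi i j
    | .inl i, .inr (.inl j) => Ass i j
    | .inl i, .inr (.inr (.inl j)) => Asd i j
    | .inl _, .inr (.inr (.inr _)) => 0
    | .inr (.inl _), .inl _ => 0
    | .inr (.inl _), .inr (.inl _) => 0
    | .inr (.inl i), .inr (.inr (.inl j)) => Add i j
    | .inr (.inl _), .inr (.inr (.inr _)) => 0
    | .inr (.inr (.inl i)), .inl j => Aui i j
    | .inr (.inr (.inl i)), .inr (.inl j) => Aus i j
    | .inr (.inr (.inl i)), .inr (.inr (.inl j)) => Aud i j
    | .inr (.inr (.inl i)), .inr (.inr (.inr j)) => Auu i j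
    | .inr (.inr (.inr i)), .inl j => Aoi i j
    | .inr (.inr (.inr i)), .inr (.inl j) => Aos i j
    | .inr (.inr (.inr i)), .inr (.inr (.inl j)) => Aod i j
    | .inr (.inr (.inr _)), .inr (.inr (.inr _)) => 0

/-- The homeostasis matrix of the core network, with rows indexed by the blocks
(σ, o) and columns indexed by the blocks (ι, σ). -/
def coreHomeostasisMatrix {s : ℕ}
    (Asi : Matrix (Fin s) (Fin 1) ℝ) (Ass : Matrix (Fin s) (Fin s) ℝ)
    (Aoi : Matrix (Fin 1) (Fin 1) ℝ) (Aos : Matrix (Fin 1) (Fin s) ℝ) :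
    Matrix (Fin s ⊕ Fin 1) (Fin 1 ⊕ Fin s) ℝ :=
  Matrix.of fun i j =>
    match i, j with
    | .inl i, .inl j => Asi i j
    | .inl i, .inr j => Ass i j
    | .inr i, .inl j => Aoi i j
    | .inr i, .inr j => Aos i j

/-- Canonical identification of the column index of the homeostasis matrix with its
row index (both of cardinality `s + d + u + 1`). -/
def hIdxEquiv (s d u : ℕ) : HColIdx s d u ≃ HRowIdx s d u :=
  (Equiv.sumComm (Fin 1) (Fin s ⊕ Fin d ⊕ Fin u)).trans
    ((Equiv.sumAssoc (Fin s) (Fin d ⊕ Fin u) (Fin 1)).trans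
      ((Equiv.refl (Fin s)).sumCongr (Equiv.sumAssoc (Fin d) (Fin u) (Fin 1))))

/-! Reorder the columns as (d, ι, σ, u) and the rows, by the same permutation, as (d, o, σ, u).
In this order `H` is block lower triangular with diagonal blocks `A_dd`, `H^c` (with its rows
listed as (o, σ)) and `A_uu`. A simultaneous permutation of rows and columns preserves the
determinant, so `ε = 1` for the pairing of columns with rows fixed by `hIdxEquiv`. -/

def hColIdxBlockTriangularEquiv (s d u : ℕ) :
    HColIdx s d u ≃ Fin d ⊕ (Fin 1 ⊕ Fin s) ⊕ Fin u where
  toFun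
    | .inl a => .inr (.inl (.inl a))
    | .inr (.inl a) => .inr (.inl (.inr a))
    | .inr (.inr (.inl a)) => .inl a
    | .inr (.inr (.inr a)) => .inr (.inr a)
  invFun
    | .inl a => .inr (.inr (.inl a))
    | .inr (.inl (.inl a)) => .inl a
    | .inr (.inl (.inr a)) => .inr (.inl a)
    | .inr (.inr a) => .inr (.inr (.inr a))
  left_inv := by rintro (a | a | a | a) <;> rfl
  right_inv := by rintro (a | (a | a) | a) <;> rfl

section

variable {s d u : ℕ}
    (Asi : Matrix (Fin s) (Fin 1) ℝ) (Ass : Matrix (Fin s) (Fin s) ℝ)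
    (Asd : Matrix (Fin s) (Fin d) ℝ)
    (Add : Matrix (Fin d) (Fin d) ℝ)
    (Aui : Matrix (Fin u) (Fin 1) ℝ) (Aus : Matrix (Fin u) (Fin s) ℝ)
    (Aud : Matrix (Fin u) (Fin d) ℝ) (Auu : Matrix (Fin u) (Fin u) ℝ)
    (Aoi : Matrix (Fin 1) (Fin 1) ℝ) (Aos : Matrix (Fin 1) (Fin s) ℝ)
    (Aod : Matrix (Fin 1) (Fin d) ℝ)

theorem coreHomeostasisMatrix_submatrix_sumComm :
    (coreHomeostasisMatrix Asi Ass Aoi Aos).submatrix (Equiv.sumComm (Fin 1) (Fin s)) id =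
      fromBlocks Aoi Aos Asi Ass := by
  ext (i | i) (j | j) <;> rfl

theorem fullHomeostasisMatrix_submatrix_eq_blockTriangular :
    (fullHomeostasisMatrix Asi Ass Asd Add Aui Aus Aud Auu Aoi Aos Aod).submatrix
        (hIdxEquiv s d u) id =
      (fromBlocks Add 0 (fromRows (fromRows Aod Asd) Aud)
          (fromBlocks (fromBlocks Aoi Aos Asi Ass) 0 (fromCols Aui Aus) Auu)).submatrix
        (hColIdxBlockTriangularEquiv s d u) (hColIdxBlockTriangularEquiv s d u) := by
  ext (i | i | i | i) (j | j | j | j) <;> rfl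

theorem det_fullHomeostasisMatrix_submatrix :
    ((fullHomeostasisMatrix Asi Ass Asd Add Aui Aus Aud Auu Aoi Aos Aod).submatrix
        (hIdxEquiv s d u) id).det =
      Add.det * Auu.det * (fromBlocks Aoi Aos Asi Ass).det := by
  rw [fullHomeostasisMatrix_submatrix_eq_blockTriangular, det_submatrix_equiv_self,
    det_fromBlocks_zero₁₂, det_fromBlocks_zero₁₂]
  ring

end

/-- There is a sign `ε = ±1`, depending only on the block dimensions `s, d, u`, such
that `det H = ε · det A_dd · det A_uu · det H^c` for all choices of the blocks. -/
theorem det_fullHomeostasisMatrix_eq (s d u : ℕ) :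
    ∃ ε : ℝ, (ε = 1 ∨ ε = -1) ∧
      ∀ (Asi : Matrix (Fin s) (Fin 1) ℝ) (Ass : Matrix (Fin s) (Fin s) ℝ)
        (Asd : Matrix (Fin s) (Fin d) ℝ)
        (Add : Matrix (Fin d) (Fin d) ℝ)
        (Aui : Matrix (Fin u) (Fin 1) ℝ) (Aus : Matrix (Fin u) (Fin s) ℝ)
        (Aud : Matrix (Fin u) (Fin d) ℝ) (Auu : Matrix (Fin u) (Fin u) ℝ)
        (Aoi : Matrix (Fin 1) (Fin 1) ℝ) (Aos : Matrix (Fin 1) (Fin s) ℝ)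
        (Aod : Matrix (Fin 1) (Fin d) ℝ),
        ((fullHomeostasisMatrix Asi Ass Asd Add Aui Aus Aud Auu Aoi Aos
            Aod).submatrix (hIdxEquiv s d u) id).det =
          ε * Add.det * Auu.det *
            ((coreHomeostasisMatrix Asi Ass Aoi Aos).submatrix
              (Equiv.sumComm (Fin 1) (Fin s)) id).det := by
  refine ⟨1, Or.inl rfl, fun Asi Ass Asd Add Aui Aus Aud Auu Aoi Aos Aod => ?_⟩
  rw [det_fullHomeostasisMatrix_submatrix, coreHomeostasisMatrix_submatrix_sumComm, one_mul]
end

section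
/- Let a, b, c, d, e, h, l > 0 be real parameters and let x_ι, x_σ, x_τ, x_o ≥ 0 with x_o > 0. For the self immune recognition model, with partial derivatives f_{σι} = −d x_σ, f_{σσ} = −d(x_o + x_ι) − e, f_{oι} = −l x_o, f_{oσ} = a x_o, one has f_{oσ} f_{σι} − f_{oι} f_{σσ} = −x_o (a d x_σ + l d x_o + l d x_ι + l e) < 0. In particular this quantity is nonzero, so the model cannot exhibit structural infinitesimal homeostasis at any equilibrium with nonnegative coordinates and x_o > 0. -/
theorem structural_factor_eq (a d e l xι xσ xo : ℝ) :
    a * xo * -(d * xσ) - -(l * xo) * (-(d * (xo + xι)) - e) =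
      -(xo * (a * d * xσ + l * d * xo + l * d * xι + l * e)) := by
  ring

theorem structural_factor_neg {a d e l xι xσ xo : ℝ} (ha : 0 < a) (hd : 0 < d) (he : 0 < e)
    (hl : 0 < l) (hxι : 0 ≤ xι) (hxσ : 0 ≤ xσ) (hxo : 0 < xo) :
    -(xo * (a * d * xσ + l * d * xo + l * d * xι + l * e)) < 0 :=
  neg_neg_of_pos (by positivity)

theorem immune_no_structural_homeostasis_general
    (a d e l : ℝ) (ha : 0 < a) (hd : 0 < d)
    (he : 0 < e) (hl : 0 < l)
    (xι xσ xo : ℝ) (hxι : 0 ≤ xι) (hxσ : 0 ≤ xσ) (hxo : 0 < xo)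
    (fσι fσσ foι foσ : ℝ)
    (hfσι : fσι = -(d * xσ)) (hfσσ : fσσ = -(d * (xo + xι)) - e)
    (hfoι : foι = -(l * xo)) (hfoσ : foσ = a * xo) :
    foσ * fσι - foι * fσσ = -(xo * (a * d * xσ + l * d * xo + l * d * xι + l * e)) ∧
    foσ * fσι - foι * fσσ < 0 ∧
    foσ * fσι - foι * fσσ ≠ 0 := by
  subst hfσι hfσσ hfoι hfoσ
  have hfactor := structural_factor_eq a d e l xι xσ xo
  have hneg : a * xo * -(d * xσ) - -(l * xo) * (-(d * (xo + xι)) - e) < 0 :=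
    hfactor ▸ structural_factor_neg ha hd he hl hxι hxσ hxo
  exact ⟨hfactor, hneg, hneg.ne⟩

/-- In the self immune recognition model, the "structural" factor
`f_{oσ} f_{σι} − f_{oι} f_{σσ}` equals `−x_o (a d x_σ + l d x_o + l d x_ι + l e)`,
which is negative (hence nonzero) at any equilibrium with nonnegative coordinates and
`x_o > 0`: the model cannot exhibit structural infinitesimal homeostasis. -/
theorem immune_no_structural_homeostasis
    (a b c d e h l : ℝ) (ha : 0 < a) (hb : 0 < b) (hc : 0 < c) (hd : 0 < d)
    (he : 0 < e) (hh : 0 < h) (hl : 0 < l)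
    (xι xσ xτ xo : ℝ) (hxι : 0 ≤ xι) (hxσ : 0 ≤ xσ) (hxτ : 0 ≤ xτ) (hxo : 0 < xo)
    (fσι fσσ foι foσ : ℝ)
    (hfσι : fσι = -(d * xσ)) (hfσσ : fσσ = -(d * (xo + xι)) - e)
    (hfoι : foι = -(l * xo)) (hfoσ : foσ = a * xo) :
    foσ * fσι - foι * fσσ = -(xo * (a * d * xσ + l * d * xo + l * d * xι + l * e)) ∧
    foσ * fσι - foι * fσσ < 0 ∧
    foσ * fσι - foι * fσσ ≠ 0 :=
  immune_no_structural_homeostasis_general a d e l ha hd he hl xι xσ xo hxι hxσ hxo fσι fσσ foι foσ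
    hfσι hfσσ hfoι hfoσ
end

section
/- Let b, f, g, h, j > 0 be real numbers. Then there do not exist real numbers x_τ and x_o with x_τ > 0 satisfying simultaneously −b + f g/(x_τ + g)² + h x_o = 0 and −b x_τ + f x_τ/(x_τ + g) + h x_τ x_o + j = 0. (Equivalently, eliminating x_o reduces the pair to f x_τ² + j (x_τ + g)² = 0, which has no solution with positive parameters.) -/
/-! Subtracting `x_τ` times the homeostasis equation from the equilibrium equation eliminates
`b` and `x_o` and leaves `f x_τ² / (x_τ + g)² + j = 0`, whose left side is positive. -/

/-- Also true when `x + g = 0`, where every quotient is `0`. -/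
lemma div_sub_mul_div_sq_eq_sq_div_sq {K : Type*} [Field K] (x g : K) :
    x / (x + g) - g * x / (x + g) ^ 2 = x ^ 2 / (x + g) ^ 2 := by
  rcases eq_or_ne (x + g) 0 with hxg | hxg
  · simp [hxg]
  · field_simp
    ring

lemma immune_equilibrium_sub_mul_homeostasis {K : Type*} [Field K] (b f g h j xτ xo : K) :
    (-(b * xτ) + f * xτ / (xτ + g) + h * xτ * xo + j)
      - xτ * (-b + f * g / (xτ + g) ^ 2 + h * xo)
      = f * (xτ ^ 2 / (xτ + g) ^ 2) + j := by
  rw [← div_sub_mul_div_sq_eq_sq_div_sq]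
  ring

theorem immune_no_null_degradation_homeostasis_general
    (b f g h j : ℝ) (hf : 0 < f)
    (hj : 0 < j) :
    ¬ ∃ xτ xo : ℝ, 0 < xτ ∧
      -b + f * g / (xτ + g) ^ 2 + h * xo = 0 ∧
      -(b * xτ) + f * xτ / (xτ + g) + h * xτ * xo + j = 0 := by
  rintro ⟨xτ, xo, -, homeostasis, equilibrium⟩
  have key := immune_equilibrium_sub_mul_homeostasis b f g h j xτ xo
  rw [homeostasis, equilibrium] at key
  have : 0 < f * (xτ ^ 2 / (xτ + g) ^ 2) + j := by positivity
  linarith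

/-- The self immune recognition model exhibits no null-degradation homeostasis in the
node τ: no `x_τ > 0` can simultaneously satisfy the equilibrium equation for `x_τ` and
the vanishing of the diagonal Jacobian entry `f_{τ,x_τ}`. -/
theorem immune_no_null_degradation_homeostasis
    (b f g h j : ℝ) (hb : 0 < b) (hf : 0 < f) (hg : 0 < g) (hh : 0 < h)
    (hj : 0 < j) :
    ¬ ∃ xτ xo : ℝ, 0 < xτ ∧
      -b + f * g / (xτ + g) ^ 2 + h * xo = 0 ∧
      -(b * xτ) + f * xτ / (xτ + g) + h * xτ * xo + j = 0 :=
  immune_no_null_degradation_homeostasis_general b f g h j hf hj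
end

section
/- Let k₃, k₄, w₂ be positive real numbers, let g ∈ (0, 1], and let x_τ ≥ 0 and x_ρ ≥ 0 be real numbers. Define f_{ττ} = −k₃ + w₂ (x_τ² + 2 x_τ − x_ρ)/(1 + x_τ)², f_{τρ} = −w₂ x_τ/(1 + x_τ), f_{ρτ} = g k₃ − w₂ (x_τ² + 2 x_τ − x_ρ)/(1 + x_τ)², f_{ρρ} = −k₄ + w₂ x_τ/(1 + x_τ). If f_{ρτ} ≠ 0, then it is impossible that both f_{ττ} f_{ρρ} − f_{τρ} f_{ρτ} = 0 and (1 + x_τ) f_{ρτ} + (1 + x_ρ) f_{ρρ} = 0 hold simultaneously. (Indeed, the two conditions together force (1 + x_τ) f_{ττ} + (1 + x_ρ) f_{τρ} = 0, which combined with the others yields (g − 1) k₃ (1 + x_τ) = k₄ (1 + x_ρ), contradicting g ≤ 1, k₃, k₄ > 0 and 1 + x_τ, 1 + x_ρ > 0.) -/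
/-!
Since `f_{ρτ} ≠ 0`, the chair condition forces `f_{ρρ} ≠ 0`, so the singular Jacobian has its
rows proportional and the vector `(1 + x_τ, 1 + x_ρ)` annihilates the first row as well. Adding the
two relations pairs that positive vector with the column sums of the Jacobian, `(g - 1) k₃ ≤ 0`
and `-k₄ < 0`, which cannot give zero.
-/

theorem mul_add_mul_eq_zero_of_det_eq_zero {R : Type*} [CommRing R] [NoZeroDivisors R]
    {a b c d p q : R} (hdet : a * d - b * c = 0) (hrow : p * c + q * d = 0) (hd : d ≠ 0) :
    p * a + q * b = 0 := by
  have h : d * (p * a + q * b) = 0 := by linear_combination p * hdet + b * hrow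
  exact (mul_eq_zero.mp h).resolve_left hd

theorem copper_no_chair_homeostasis_general
    (k₃ k₄ w₂ g : ℝ) (hk₃ : 0 < k₃) (hk₄ : 0 < k₄)
    (hg1 : g ≤ 1)
    (xτ xρ : ℝ) (hxτ : 0 ≤ xτ) (hxρ : 0 ≤ xρ)
    (fττ fτρ fρτ fρρ : ℝ)
    (hfττ : fττ = -k₃ + w₂ * (xτ ^ 2 + 2 * xτ - xρ) / (1 + xτ) ^ 2)
    (hfτρ : fτρ = -(w₂ * xτ / (1 + xτ)))
    (hfρτ : fρτ = g * k₃ - w₂ * (xτ ^ 2 + 2 * xτ - xρ) / (1 + xτ) ^ 2)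
    (hfρρ : fρρ = -k₄ + w₂ * xτ / (1 + xτ))
    (hne : fρτ ≠ 0) :
    ¬ (fττ * fρρ - fτρ * fρτ = 0 ∧
       (1 + xτ) * fρτ + (1 + xρ) * fρρ = 0) := by
  rintro ⟨hdet, hchair⟩
  have hτ : 0 < 1 + xτ := by linarith
  have hρ : 0 < 1 + xρ := by linarith
  have hρρ : fρρ ≠ 0 := fun h => hne <| by simpa [h, hτ.ne'] using hchair
  have hfirst : (1 + xτ) * fττ + (1 + xρ) * fτρ = 0 :=
    mul_add_mul_eq_zero_of_det_eq_zero hdet hchair hρρ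
  have hcolτ : fττ + fρτ = (g - 1) * k₃ := by rw [hfττ, hfρτ]; ring
  have hcolρ : fτρ + fρρ = -k₄ := by rw [hfτρ, hfρρ]; ring
  have hsum : (1 + xτ) * ((g - 1) * k₃) = (1 + xρ) * k₄ := by
    linear_combination hfirst + hchair - (1 + xτ) * hcolτ - (1 + xρ) * hcolρ
  have hlhs : (1 + xτ) * ((g - 1) * k₃) ≤ 0 :=
    mul_nonpos_of_nonneg_of_nonpos hτ.le (mul_nonpos_of_nonpos_of_nonneg (by linarith) hk₃.le)
  linarith [mul_pos hρ hk₄]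

/-- In the intracellular copper regulation model, appendage homeostasis
(`f_{ττ} f_{ρρ} − f_{τρ} f_{ρτ} = 0`) is incompatible with the chair condition
`(1 + x_τ) f_{ρτ} + (1 + x_ρ) f_{ρρ} = 0` (given `f_{ρτ} ≠ 0`): every appendage
homeostasis point of the copper model is a point of simple homeostasis. -/
theorem copper_no_chair_homeostasis
    (k₃ k₄ w₂ g : ℝ) (hk₃ : 0 < k₃) (hk₄ : 0 < k₄) (hw₂ : 0 < w₂)
    (hg : 0 < g) (hg1 : g ≤ 1)
    (xτ xρ : ℝ) (hxτ : 0 ≤ xτ) (hxρ : 0 ≤ xρ)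
    (fττ fτρ fρτ fρρ : ℝ)
    (hfττ : fττ = -k₃ + w₂ * (xτ ^ 2 + 2 * xτ - xρ) / (1 + xτ) ^ 2)
    (hfτρ : fτρ = -(w₂ * xτ / (1 + xτ)))
    (hfρτ : fρτ = g * k₃ - w₂ * (xτ ^ 2 + 2 * xτ - xρ) / (1 + xτ) ^ 2)
    (hfρρ : fρρ = -k₄ + w₂ * xτ / (1 + xτ))
    (hne : fρτ ≠ 0) :
    ¬ (fττ * fρρ - fτρ * fρτ = 0 ∧
       (1 + xτ) * fρτ + (1 + xρ) * fρρ = 0) :=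
  copper_no_chair_homeostasis_general k₃ k₄ w₂ g hk₃ hk₄ hg1 xτ xρ hxτ hxρ fττ fτρ fρτ fρρ hfττ hfτρ
    hfρτ hfρρ hne
end
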